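/- Let V₀, V₁, V₂ be symplectic vector spaces and Λ₀₁ ⊂ V₀⁻ × V₁, Λ₁₂ ⊂ V₁⁻ × V₂ Lagrangian subspaces whose product is transverse to V₀ × Δ_{V₁} × V₂, with composed Lagrangian Λ₀₂ ⊂ V₀⁻ × V₂. Equip the product spaces with inner products compatible with the symplectic structures. Then there is a constant C > 0 such that every vector ξ̂ = (ξ₀₂', ξ₁', ξ₁) ∈ V₀ × V₂ × V₁ × V₁ satisfies |ξ̂| ≤ C (|π₀₂ ξ₀₂'| + |ξ₁' − ξ₁| + |π⊥ ξ̂|), where π₀₂ is the orthogonal projection of V₀ × V₂ onto Λ₀₂ and π⊥ is the orthogonal projection of V₀ × V₂ × V₁ × V₁ onto the orthogonal complement of (Λ₀₁ × Λ₁₂)ᵀ. -/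

import Mathlib

/-!
The three quantities on the right are norms of linear functions of `ξ̂` with trivial common
kernel, and on a finite-dimensional space an injective linear map is bounded below.
For the kernel: if `ξ̂ ∈ (Λ₀₁ × Λ₁₂)ᵀ` and `ξ₁' = ξ₁`, then `ξ₀₂' ∈ Λ₀₂`, so `π₀₂ ξ₀₂' = 0`
forces `ξ₀₂' = 0`. Then `(0, ξ₁) ∈ Λ₀₁` and `(ξ₁, 0) ∈ Λ₁₂`, so isotropy makes `ξ₁`
`ω₁`-orthogonal to the `V₁`-components of both Lagrangians; by transversality these
components span `V₁`, and nondegeneracy of `ω₁` gives `ξ₁ = 0`.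
-/

/-- A (linear) symplectic form, given as a plain bilinear-skew-nondegenerate pairing. -/
def IsSymplecticForm {V : Type*} [AddCommGroup V] [Module ℝ V] (ω : V → V → ℝ) : Prop :=
  (∀ (a : ℝ) (x y z : V), ω (a • x + y) z = a * ω x z + ω y z) ∧
  (∀ x y : V, ω x y = - ω y x) ∧
  (∀ x : V, (∀ y : V, ω x y = 0) → x = 0)

/-- A Lagrangian subspace: a set equal to its own `ω`-orthogonal complement. -/
def IsLagrangianSubspace {V : Type*} [AddCommGroup V] [Module ℝ V]
    (ω : V → V → ℝ) (L : Set V) : Prop :=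
  L = {x | ∀ y ∈ L, ω x y = 0}

namespace IsSymplecticForm

variable {V : Type*} [AddCommGroup V] [Module ℝ V] {ω : V → V → ℝ}

theorem map_zero_left (hω : IsSymplecticForm ω) (z : V) : ω 0 z = 0 := by
  have h := hω.1 1 0 0 z
  simp only [smul_zero, add_zero, one_mul] at h
  linarith

theorem map_sub_right (hω : IsSymplecticForm ω) (x y z : V) :
    ω x (y - z) = ω x y - ω x z := by
  have h := hω.1 (-1) z y x
  rw [neg_one_smul, neg_add_eq_sub] at h
  rw [hω.2.1 x, h, hω.2.1 z, hω.2.1 y]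
  ring

end IsSymplecticForm

theorem IsLagrangianSubspace.isotropic {V : Type*} [AddCommGroup V] [Module ℝ V]
    {ω : V → V → ℝ} {L : Set V} (hL : IsLagrangianSubspace ω L) :
    ∀ x ∈ L, ∀ y ∈ L, ω x y = 0 := by
  intro x hx
  rw [hL] at hx
  exact hx

theorem exists_eq_snd_sub_fst_of_transverse {V0 V1 V2 : Type*} [AddCommGroup V0]
    [AddCommGroup V1] [AddCommGroup V2] {Λ01 : Set (V0 × V1)} {Λ12 : Set (V1 × V2)}
    (htrans : ∀ x : (V0 × V1) × (V1 × V2), ∃ a ∈ Λ01, ∃ b ∈ Λ12,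
      ∃ (d0 : V0) (d1 : V1) (d2 : V2), x = ((a.1 + d0, a.2 + d1), (b.1 + d1, b.2 + d2)))
    (y : V1) : ∃ a ∈ Λ01, ∃ b ∈ Λ12, y = a.2 - b.1 := by
  obtain ⟨a, ha, b, hb, _, d1, _, hx⟩ := htrans ((0, y), (0, 0))
  simp only [Prod.mk.injEq] at hx
  refine ⟨a, ha, b, hb, ?_⟩
  rw [hx.1.2, sub_eq_add_neg, eq_neg_of_add_eq_zero_right hx.2.1.symm]

theorem eq_zero_of_isotropic_of_sub_surjective {V0 V1 V2 : Type*}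
    [AddCommGroup V0] [Module ℝ V0] [AddCommGroup V1] [Module ℝ V1]
    [AddCommGroup V2] [Module ℝ V2] {ω0 : V0 → V0 → ℝ} {ω1 : V1 → V1 → ℝ} {ω2 : V2 → V2 → ℝ}
    (hω0 : IsSymplecticForm ω0) (hω1 : IsSymplecticForm ω1) (hω2 : IsSymplecticForm ω2)
    {Λ01 : Set (V0 × V1)} {Λ12 : Set (V1 × V2)}
    (h01 : ∀ p ∈ Λ01, ∀ q ∈ Λ01, -(ω0 p.1 q.1) + ω1 p.2 q.2 = 0)
    (h12 : ∀ p ∈ Λ12, ∀ q ∈ Λ12, -(ω1 p.1 q.1) + ω2 p.2 q.2 = 0)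
    (hsub : ∀ y : V1, ∃ a ∈ Λ01, ∃ b ∈ Λ12, y = a.2 - b.1)
    {v : V1} (hv01 : ((0 : V0), v) ∈ Λ01) (hv12 : (v, (0 : V2)) ∈ Λ12) : v = 0 := by
  refine hω1.2.2 v fun y => ?_
  obtain ⟨a, ha, b, hb, rfl⟩ := hsub y
  have hva := h01 _ hv01 a ha
  have hvb := h12 _ hv12 b hb
  simp only [hω0.map_zero_left, hω2.map_zero_left] at hva hvb
  rw [hω1.map_sub_right]
  linarith

theorem exists_norm_le_mul_add_add_of_injective {E F G H : Type*}
    [NormedAddCommGroup E] [NormedSpace ℝ E] [FiniteDimensional ℝ E]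
    [NormedAddCommGroup F] [NormedSpace ℝ F] [NormedAddCommGroup G] [NormedSpace ℝ G]
    [NormedAddCommGroup H] [NormedSpace ℝ H]
    (f : E →ₗ[ℝ] F) (g : E →ₗ[ℝ] G) (h : E →ₗ[ℝ] H)
    (hinj : ∀ x, f x = 0 → g x = 0 → h x = 0 → x = 0) :
    ∃ C > 0, ∀ x, ‖x‖ ≤ C * (‖f x‖ + ‖g x‖ + ‖h x‖) := by
  have hker : LinearMap.ker (f.prod (g.prod h)) = ⊥ := by
    refine LinearMap.ker_eq_bot'.mpr fun x hx => ?_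
    obtain ⟨hfx, hghx⟩ := Prod.mk_eq_zero.mp hx
    obtain ⟨hgx, hhx⟩ := Prod.mk_eq_zero.mp hghx
    exact hinj x hfx hgx hhx
  obtain ⟨K, hK, hanti⟩ := (f.prod (g.prod h)).exists_antilipschitzWith hker
  refine ⟨K, hK, fun x => (hanti.le_mul_norm (map_zero _) x).trans ?_⟩
  gcongr
  calc ‖f.prod (g.prod h) x‖ = max ‖f x‖ (max ‖g x‖ ‖h x‖) := rfl
    _ ≤ ‖f x‖ + ‖g x‖ + ‖h x‖ := by
      have := norm_nonneg (f x); have := norm_nonneg (g x); have := norm_nonneg (h x)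
      exact max_le (by linarith) (max_le (by linarith) (by linarith))

/-- Quantitative transversality, first estimate: every `ξ̂ = (ξ₀₂', ξ₁', ξ₁)` in
`V₀ × V₂ × V₁ × V₁` satisfies `|ξ̂| ≤ C (|π₀₂ ξ₀₂'| + |ξ₁' − ξ₁| + |π⊥ ξ̂|)`, where
`π₀₂` is the orthogonal projection onto the composed Lagrangian `Λ₀₂` and `π⊥` the
orthogonal projection onto the orthogonal complement of `(Λ₀₁ × Λ₁₂)ᵀ`. -/
theorem stmt_4 {V0 V1 V2 : Type*}
    [NormedAddCommGroup V0] [InnerProductSpace ℝ V0] [FiniteDimensional ℝ V0]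
    [NormedAddCommGroup V1] [InnerProductSpace ℝ V1] [FiniteDimensional ℝ V1]
    [NormedAddCommGroup V2] [InnerProductSpace ℝ V2] [FiniteDimensional ℝ V2]
    (ω0 : V0 → V0 → ℝ) (ω1 : V1 → V1 → ℝ) (ω2 : V2 → V2 → ℝ)
    (hω0 : IsSymplecticForm ω0) (hω1 : IsSymplecticForm ω1) (hω2 : IsSymplecticForm ω2)
    (Λ01 : Set (V0 × V1)) (Λ12 : Set (V1 × V2))
    (h01 : IsLagrangianSubspace
      (fun p q : V0 × V1 => -(ω0 p.1 q.1) + ω1 p.2 q.2) Λ01)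
    (h12 : IsLagrangianSubspace
      (fun p q : V1 × V2 => -(ω1 p.1 q.1) + ω2 p.2 q.2) Λ12)
    (htrans : ∀ x : (V0 × V1) × (V1 × V2), ∃ a ∈ Λ01, ∃ b ∈ Λ12,
      ∃ (d0 : V0) (d1 : V1) (d2 : V2),
        x = ((a.1 + d0, a.2 + d1), (b.1 + d1, b.2 + d2)))
    -- the composed Lagrangian `Λ₀₂ ⊂ V₀ × V₂` (with the ℓ² inner product)
    (Λ02 : Submodule ℝ (WithLp 2 (V0 × V2)))
    (hΛ02 : ∀ p : WithLp 2 (V0 × V2), p ∈ Λ02 ↔ ∃ v1 : V1,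
      ((WithLp.equiv 2 (V0 × V2) p).1, v1) ∈ Λ01 ∧
      (v1, (WithLp.equiv 2 (V0 × V2) p).2) ∈ Λ12)
    -- the transposed Lagrangian `(Λ₀₁ × Λ₁₂)ᵀ ⊂ V₀ × V₂ × V₁ × V₁`
    (T : Submodule ℝ (WithLp 2 (WithLp 2 (V0 × V2) × WithLp 2 (V1 × V1))))
    (hT : ∀ w : WithLp 2 (WithLp 2 (V0 × V2) × WithLp 2 (V1 × V1)), w ∈ T ↔
      (((WithLp.equiv 2 (V0 × V2)
          ((WithLp.equiv 2 (WithLp 2 (V0 × V2) × WithLp 2 (V1 × V1)) w).1)).1,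
        (WithLp.equiv 2 (V1 × V1)
          ((WithLp.equiv 2 (WithLp 2 (V0 × V2) × WithLp 2 (V1 × V1)) w).2)).1) ∈ Λ01 ∧
       ((WithLp.equiv 2 (V1 × V1)
          ((WithLp.equiv 2 (WithLp 2 (V0 × V2) × WithLp 2 (V1 × V1)) w).2)).2,
        (WithLp.equiv 2 (V0 × V2)
          ((WithLp.equiv 2 (WithLp 2 (V0 × V2) × WithLp 2 (V1 × V1)) w).1)).2) ∈ Λ12)) :
    ∃ C : ℝ, 0 < C ∧ ∀ w : WithLp 2 (WithLp 2 (V0 × V2) × WithLp 2 (V1 × V1)),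
      ‖w‖ ≤ C * (
        ‖(Submodule.orthogonalProjectionOnto Λ02
            ((WithLp.equiv 2 (WithLp 2 (V0 × V2) × WithLp 2 (V1 × V1)) w).1) :
          WithLp 2 (V0 × V2))‖ +
        ‖(WithLp.equiv 2 (V1 × V1)
            ((WithLp.equiv 2 (WithLp 2 (V0 × V2) × WithLp 2 (V1 × V1)) w).2)).1 -
         (WithLp.equiv 2 (V1 × V1)
            ((WithLp.equiv 2 (WithLp 2 (V0 × V2) × WithLp 2 (V1 × V1)) w).2)).2‖ +
        ‖(Submodule.orthogonalProjectionOnto Tᗮ w :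
          WithLp 2 (WithLp 2 (V0 × V2) × WithLp 2 (V1 × V1)))‖) := by
  have hcore : ∀ v : V1, ((0 : V0), v) ∈ Λ01 → (v, (0 : V2)) ∈ Λ12 → v = 0 := fun _ =>
    eq_zero_of_isotropic_of_sub_surjective hω0 hω1 hω2 h01.isotropic h12.isotropic
      (exists_eq_snd_sub_fst_of_transverse htrans)
  have hker : ∀ w : WithLp 2 (WithLp 2 (V0 × V2) × WithLp 2 (V1 × V1)),
      w.fst ∈ Λ02ᗮ → w.snd.fst = w.snd.snd → w ∈ T → w = 0 := by
    intro w hperp hdiag hwT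
    obtain ⟨hw01, hw12⟩ := (hT w).mp hwT
    have hw02 : w.fst ∈ Λ02 := (hΛ02 _).mpr ⟨w.snd.snd, hdiag ▸ hw01, hw12⟩
    have hfst : w.fst = 0 := Submodule.disjoint_def.mp Λ02.orthogonal_disjoint _ hw02 hperp
    have hsnd : w.snd.snd = 0 :=
      hcore _ (by simpa [hfst, hdiag] using hw01) (by simpa [hfst] using hw12)
    have hsnd' : w.snd = 0 := WithLp.ofLp_injective 2 (Prod.ext (hdiag.trans hsnd) hsnd)
    exact WithLp.ofLp_injective 2 (Prod.ext hfst hsnd')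
  obtain ⟨C, hC, hle⟩ := exists_norm_le_mul_add_add_of_injective
    (Λ02.orthogonalProjectionOnto.toLinearMap ∘ₗ
      WithLp.fstₗ 2 ℝ (WithLp 2 (V0 × V2)) (WithLp 2 (V1 × V1)))
    ((LinearMap.fst ℝ V1 V1 - LinearMap.snd ℝ V1 V1) ∘ₗ
      (WithLp.linearEquiv 2 ℝ (V1 × V1)).toLinearMap ∘ₗ
      WithLp.sndₗ 2 ℝ (WithLp 2 (V0 × V2)) (WithLp 2 (V1 × V1)))
    Tᗮ.orthogonalProjectionOnto.toLinearMap fun w h1 h2 h3 =>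
      hker w (Submodule.orthogonalProjectionOnto_eq_zero_iff.mp h1) (sub_eq_zero.mp h2)
        (by simpa [Submodule.orthogonal_orthogonal] using
          Submodule.orthogonalProjectionOnto_eq_zero_iff.mp h3)
  exact ⟨C, hC, hle⟩
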